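/- Let H ∈ (0,1). For t ∈ ℝ define f_t : ℝ → ℝ by f_t(u) = (t−u)_+^{H−1/2} − (−u)_+^{H−1/2}. Then each f_t belongs to L²(ℝ), and there exists a constant κ_H > 0, depending only on H, such that for all s, t ∈ ℝ: ∫_ℝ f_t(u) f_s(u) du = κ_H ( |t|^{2H} + |s|^{2H} − |t−s|^{2H} ). -/

import Mathlib

open MeasureTheory

open Set

/-- `pospow x a = x^a` for `x > 0` and `0` for `x ≤ 0` (with `x_+^0 = 1` for `x > 0`). -/
noncomputable def pospow (x a : ℝ) : ℝ := if 0 < x then x ^ a else 0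

/-- The Mandelbrot–Van Ness moving-average kernel of fractional Brownian motion. -/
noncomputable def mvnKernel (H t : ℝ) (u : ℝ) : ℝ :=
  pospow (t - u) (H - 1/2) - pospow (-u) (H - 1/2)

lemma pospow_eq_indicator (r : ℝ) :
    (fun x => pospow x r) = (Set.Ioi (0:ℝ)).indicator (fun x => x ^ r) := by
  funext x
  simp only [pospow, Set.indicator, Set.mem_Ioi]

lemma pospow_eq_indicator' (r : ℝ) :
    (fun x => pospow x r) = (Set.Ioi (0:ℝ)).indicator (fun x => Real.exp (Real.log x * r)) := by
  funext x
  simp only [pospow, Set.indicator, Set.mem_Ioi]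
  split
  · rename_i h
    rw [Real.rpow_def_of_pos h]
  · rfl

lemma measurable_pospow (r : ℝ) : Measurable fun x : ℝ => pospow x r := by
  rw [pospow_eq_indicator' r]
  exact ((Real.measurable_log.mul_const r).exp).indicator measurableSet_Ioi

lemma pospow_nonneg (x r : ℝ) : 0 ≤ pospow x r := by
  unfold pospow; split
  · exact Real.rpow_nonneg (by linarith) r
  · exact le_refl _

lemma sq_pospow (x r : ℝ) : pospow x r ^ 2 = pospow x (2*r) := by
  unfold pospow
  split
  · rename_i h
    rw [sq, ← Real.rpow_add h, two_mul]
  · simp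

lemma pospow_const_mul {c : ℝ} (hc : 0 < c) (x r : ℝ) :
    pospow (c * x) r = c ^ r * pospow x r := by
  unfold pospow
  rcases lt_or_ge 0 x with hx | hx
  · rw [if_pos (mul_pos hc hx), if_pos hx, Real.mul_rpow hc.le hx.le]
  · rw [if_neg (not_lt.2 (mul_nonpos_of_nonneg_of_nonpos hc.le hx)), if_neg (not_lt.2 hx),
      mul_zero]

lemma integrableOn_rpow_Ioc {r : ℝ} (hr : -1 < r) (M : ℝ) :
    IntegrableOn (fun x : ℝ => x ^ r) (Set.Ioc 0 M) volume := by
  have h := intervalIntegrable_iff.mp (intervalIntegral.intervalIntegrable_rpow' hr (a := 0) (b := M))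
  exact h.mono_set Set.Ioc_subset_uIoc

lemma intervalIntegrable_pospow {r : ℝ} (hr : -1 < r) (a b : ℝ) :
    IntervalIntegrable (fun x => pospow x r) volume a b := by
  rw [intervalIntegrable_iff, pospow_eq_indicator, IntegrableOn,
    integrable_indicator_iff measurableSet_Ioi, IntegrableOn,
    Measure.restrict_restrict measurableSet_Ioi]
  refine (integrableOn_rpow_Ioc hr (max a b)).mono_set ?_
  rintro x ⟨hx1, hx2⟩
  exact ⟨hx1, hx2.2⟩

lemma measurable_mvn (H t : ℝ) : Measurable (mvnKernel H t) := by
  unfold mvnKernel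
  exact ((measurable_pospow _).comp (measurable_const.sub measurable_id)).sub
    ((measurable_pospow _).comp measurable_neg)

lemma mvn_reflect (H t u : ℝ) : mvnKernel H t u = - mvnKernel H (-t) (u - t) := by
  unfold mvnKernel
  rw [show -t - (u - t) = -u from by ring, show -(u - t) = t - u from by ring]
  ring

lemma mvn_zero (H u : ℝ) : mvnKernel H 0 u = 0 := by
  unfold mvnKernel
  rw [zero_sub]
  ring

lemma mvn_scale {c : ℝ} (hc : 0 < c) (H t u : ℝ) :
    mvnKernel H (c * t) (c * u) = c ^ (H - 1/2) * mvnKernel H t u := by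
  unfold mvnKernel
  rw [show c * t - c * u = c * (t - u) from by ring, show -(c * u) = c * (-u) from by ring,
    pospow_const_mul hc, pospow_const_mul hc]
  ring

lemma mvn_scale' {c : ℝ} (hc : 0 < c) (H t u : ℝ) :
    mvnKernel H (c * t) u = c ^ (H - 1/2) * mvnKernel H t (c⁻¹ * u) := by
  rw [← mvn_scale hc H t (c⁻¹ * u), mul_inv_cancel_left₀ hc.ne']

lemma mvn_translate (H t s u : ℝ) :
    mvnKernel H t u - mvnKernel H s u = mvnKernel H (t - s) (u - s) := by
  unfold mvnKernel
  rw [show t - s - (u - s) = t - u from by ring, show -(u - s) = s - u from by ring]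
  ring

lemma mvn_one_tail {H : ℝ} (hH : H ∈ Set.Ioo (0:ℝ) 1) {u : ℝ} (hu : u ≤ -1) :
    mvnKernel H 1 u ^ 2 ≤ (H - 1/2)^2 * (-u) ^ (2*H - 3) := by
  obtain ⟨h0, h1⟩ := hH
  have hx : (1:ℝ) ≤ -u := by linarith
  have hx0 : (0:ℝ) < -u := by linarith
  have e : mvnKernel H 1 u = (-u + 1) ^ (H - 1/2) - (-u) ^ (H - 1/2) := by
    unfold mvnKernel pospow
    rw [if_pos (by linarith : (0:ℝ) < 1 - u), if_pos hx0,
      show (1:ℝ) - u = -u + 1 from by ring]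
  have hcont : ContinuousOn (fun y : ℝ => y ^ (H - 1/2)) (Set.Icc (-u) (-u + 1)) := by
    intro y hy
    exact (Real.continuousAt_rpow_const y (H - 1/2)
      (Or.inl (ne_of_gt (by nlinarith [hy.1])))).continuousWithinAt
  have hderiv : ∀ y ∈ Set.Ioo (-u) (-u + 1),
      HasDerivAt (fun y : ℝ => y ^ (H - 1/2)) ((H - 1/2) * y ^ (H - 1/2 - 1)) y := by
    intro y hy
    exact Real.hasDerivAt_rpow_const (Or.inl (ne_of_gt (by nlinarith [hy.1])))
  obtain ⟨ξ, hξ, hslope⟩ := exists_hasDerivAt_eq_slope (fun y : ℝ => y ^ (H - 1/2))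
    (fun y : ℝ => (H - 1/2) * y ^ (H - 1/2 - 1)) (show -u < -u + 1 by linarith)
    hcont hderiv
  have hslope' : mvnKernel H 1 u = (H - 1/2) * ξ ^ (H - 1/2 - 1) := by
    rw [e, hslope]
    simp
  have hξpos : (0:ℝ) < ξ := lt_trans hx0 hξ.1
  have hb : ξ ^ (H - 1/2 - 1) ≤ (-u) ^ (H - 1/2 - 1) :=
    Real.rpow_le_rpow_of_nonpos hx0 hξ.1.le (by linarith)
  have hbn : (0:ℝ) ≤ ξ ^ (H - 1/2 - 1) := Real.rpow_nonneg hξpos.le _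
  have key : mvnKernel H 1 u ^ 2 ≤ (H - 1/2)^2 * ((-u) ^ (H - 1/2 - 1))^2 := by
    rw [hslope', mul_pow]
    have h2 : (ξ ^ (H - 1/2 - 1))^2 ≤ ((-u) ^ (H - 1/2 - 1))^2 :=
      pow_le_pow_left₀ hbn hb 2
    nlinarith [sq_nonneg (H - 1/2)]
  calc mvnKernel H 1 u ^ 2 ≤ (H - 1/2)^2 * ((-u) ^ (H - 1/2 - 1))^2 := key
    _ = (H - 1/2)^2 * (-u) ^ (2*H - 3) := by
        rw [sq ((-u) ^ (H - 1/2 - 1)), ← Real.rpow_add hx0]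
        congr 1
        ring

lemma intSq_one {H : ℝ} (hH : H ∈ Set.Ioo (0:ℝ) 1) :
    Integrable (fun u => mvnKernel H 1 u ^ 2) (volume : Measure ℝ) := by
  obtain ⟨h0, h1⟩ := hH
  have hmeas : AEStronglyMeasurable (fun u => mvnKernel H 1 u ^ 2) (volume : Measure ℝ) :=
    (((measurable_mvn H 1).pow_const 2)).aestronglyMeasurable
  have ha1 : (-1:ℝ) < 2*(H - 1/2) := by linarith
  rw [← integrableOn_univ, ← Set.Iic_union_Ioi (a := (-1:ℝ)), integrableOn_union,
      ← Set.Ioc_union_Ioi_eq_Ioi (by norm_num : (-1:ℝ) ≤ 1), integrableOn_union]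
  refine ⟨?_, ?_, ?_⟩
  · -- tail at -∞
    have A : MeasurableEmbedding (fun x : ℝ => -x) :=
      (Homeomorph.neg ℝ).isClosedEmbedding.measurableEmbedding
    have hI : IntegrableOn (fun x : ℝ => (H-1/2)^2 * x ^ (2*H-3)) (Set.Ici (1:ℝ)) volume := by
      rw [integrableOn_Ici_iff_integrableOn_Ioi]
      exact (integrableOn_Ioi_rpow_of_lt (by linarith) one_pos).const_mul _
    have hbig : IntegrableOn (fun u : ℝ => (H-1/2)^2 * (-u) ^ (2*H-3)) (Set.Iic (-1:ℝ)) volume := by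
      have B := A.integrableOn_map_iff
        (f := fun u : ℝ => (H-1/2)^2 * (-u) ^ (2*H-3)) (s := Set.Iic (-1:ℝ)) (μ := volume)
      rw [Measure.map_neg_eq_self] at B
      rw [B]
      have hset : (fun x : ℝ => -x) ⁻¹' (Set.Iic (-1:ℝ)) = Set.Ici (1:ℝ) := by
        ext x; simp [Set.mem_Iic, Set.mem_Ici]
      rw [hset]
      refine hI.congr_fun (fun x _ => ?_) measurableSet_Ici
      simp [Function.comp]
    refine Integrable.mono' hbig hmeas.restrict ?_
    rw [ae_restrict_iff' measurableSet_Iic]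
    refine Filter.Eventually.of_forall (fun u hu => ?_)
    rw [Real.norm_eq_abs, abs_of_nonneg (sq_nonneg _)]
    exact mvn_one_tail ⟨h0, h1⟩ hu
  · -- middle
    have i1 : IntervalIntegrable (fun u : ℝ => pospow (1-u) (2*(H-1/2))) volume (-1) 1 := by
      have h := (intervalIntegrable_pospow ha1 (2:ℝ) (0:ℝ)).comp_sub_left 1
      norm_num at h
      exact h
    have i2 : IntervalIntegrable (fun u : ℝ => pospow (-u) (2*(H-1/2))) volume (-1) 1 := by
      have h := (IntervalIntegrable.iff_comp_neg (f := fun x => pospow x (2*(H-1/2)))).mp (intervalIntegrable_pospow ha1 (1:ℝ) (-1:ℝ))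
      norm_num at h
      exact h
    have hii : IntegrableOn
        (fun u : ℝ => 2 * pospow (1-u) (2*(H-1/2)) + 2 * pospow (-u) (2*(H-1/2)))
        (Set.Ioc (-1:ℝ) 1) volume :=
      ((i1.const_mul 2).add (i2.const_mul 2)).1
    refine Integrable.mono' hii hmeas.restrict ?_
    refine Filter.Eventually.of_forall (fun u => ?_)
    rw [Real.norm_eq_abs, abs_of_nonneg (sq_nonneg _)]
    have e1 : pospow (1-u) (2*(H-1/2)) = pospow (1-u) (H-1/2) ^ 2 := (sq_pospow _ _).symm
    have e2 : pospow (-u) (2*(H-1/2)) = pospow (-u) (H-1/2) ^ 2 := (sq_pospow _ _).symm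
    rw [e1, e2]
    unfold mvnKernel
    nlinarith [sq_nonneg (pospow (1-u) (H-1/2) + pospow (-u) (H-1/2))]
  · -- right of 1 : kernel vanishes
    have hz : Set.EqOn (fun u : ℝ => mvnKernel H 1 u ^ 2) (fun _ => (0:ℝ)) (Set.Ioi 1) := by
      intro u hu
      have h1u : ¬ (0:ℝ) < 1 - u := by simp at hu ⊢; linarith
      have h2u : ¬ (0:ℝ) < -u := by simp at hu ⊢; linarith
      simp only [mvnKernel, pospow, if_neg h1u, if_neg h2u]
      norm_num
    exact (integrableOn_congr_fun hz measurableSet_Ioi).mpr (integrableOn_zero)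

lemma intSq_all {H : ℝ} (hH : H ∈ Set.Ioo (0:ℝ) 1) (t : ℝ) :
    Integrable (fun u => mvnKernel H t u ^ 2) (volume : Measure ℝ) := by
  rcases lt_trichotomy t 0 with ht | ht | ht
  · -- t < 0 : reflect
    have hpos : Integrable (fun u => mvnKernel H (-t) u ^ 2) (volume : Measure ℝ) := by
      have hneg : (0:ℝ) < -t := by linarith
      have e : (fun u => mvnKernel H (-t) u ^ 2)
          = fun u => ((-t) ^ (H - 1/2)) ^ 2 * mvnKernel H 1 ((-t)⁻¹ * u) ^ 2 := by
        funext u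
        rw [show (-t : ℝ) = (-t) * 1 from (mul_one _).symm] -- rewrite target head
        rw [mvn_scale' hneg H 1 u]
        ring_nf
      rw [e]
      exact ((intSq_one hH).comp_mul_left' (inv_ne_zero hneg.ne')).const_mul _
    have e2 : (fun u => mvnKernel H t u ^ 2)
        = fun u => (fun v => mvnKernel H (-t) v ^ 2) (u - t) := by
      funext u
      rw [mvn_reflect H t u]
      ring
    rw [e2]
    exact hpos.comp_sub_right t
  · subst ht
    have e : (fun u => mvnKernel H 0 u ^ 2) = fun _ => (0:ℝ) := by
      funext u; rw [mvn_zero]; norm_num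
    rw [e]
    exact integrable_zero _ _ _
  · have e : (fun u => mvnKernel H t u ^ 2)
        = fun u => (t ^ (H - 1/2)) ^ 2 * mvnKernel H 1 (t⁻¹ * u) ^ 2 := by
      funext u
      rw [show (t : ℝ) = t * 1 from (mul_one _).symm]
      rw [mvn_scale' ht H 1 u]
      ring_nf
    rw [e]
    exact ((intSq_one hH).comp_mul_left' (inv_ne_zero ht.ne')).const_mul _

lemma N_scale {H : ℝ} (hH : H ∈ Set.Ioo (0:ℝ) 1) {c : ℝ} (hc : 0 < c) :
    (∫ u, mvnKernel H c u ^ 2) = c ^ (2*H) * ∫ u, mvnKernel H 1 u ^ 2 := by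
  have e : (fun u => mvnKernel H c u ^ 2)
      = fun u => (c ^ (H - 1/2)) ^ 2 * (fun v => mvnKernel H 1 v ^ 2) (c⁻¹ * u) := by
    funext u
    rw [show (c : ℝ) = c * 1 from (mul_one _).symm]
    rw [mvn_scale' hc H 1 u]
    ring_nf
  rw [e]
  rw [integral_const_mul]
  rw [Measure.integral_comp_inv_mul_left (fun v => mvnKernel H 1 v ^ 2) c]
  rw [abs_of_pos hc, smul_eq_mul, ← mul_assoc]
  congr 1
  rw [← Real.rpow_natCast (c ^ (H - 1/2)) 2, ← Real.rpow_mul hc.le]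
  nth_rewrite 2 [← Real.rpow_one c]
  rw [← Real.rpow_add hc]
  congr 1
  ring

lemma N_neg {H : ℝ} (hH : H ∈ Set.Ioo (0:ℝ) 1) (t : ℝ) :
    (∫ u, mvnKernel H (-t) u ^ 2) = ∫ u, mvnKernel H t u ^ 2 := by
  have e : (fun u => mvnKernel H (-t) u ^ 2)
      = fun u => (fun v => mvnKernel H t v ^ 2) (u + t) := by
    funext u
    rw [mvn_reflect H (-t) u, neg_neg, sub_neg_eq_add]
    ring
  rw [e]
  exact integral_add_right_eq_self (fun v => mvnKernel H t v ^ 2) t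

lemma N_abs {H : ℝ} (hH : H ∈ Set.Ioo (0:ℝ) 1) (t : ℝ) :
    (∫ u, mvnKernel H t u ^ 2) = |t| ^ (2*H) * ∫ u, mvnKernel H 1 u ^ 2 := by
  rcases lt_trichotomy t 0 with ht | ht | ht
  · rw [← N_neg hH t, N_scale hH (show (0:ℝ) < -t by linarith), abs_of_neg ht]
  · subst ht
    simp only [abs_zero]
    rw [Real.zero_rpow (by nlinarith [hH.1] : (2*H : ℝ) ≠ 0), zero_mul]
    have e : (fun u => mvnKernel H 0 u ^ 2) = fun _ => (0:ℝ) := by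
      funext u; rw [mvn_zero]; norm_num
    rw [e, integral_zero]
  · rw [N_scale hH ht, abs_of_pos ht]

lemma N_one_pos {H : ℝ} (hH : H ∈ Set.Ioo (0:ℝ) 1) :
    0 < ∫ u, mvnKernel H 1 u ^ 2 := by
  obtain ⟨h0, h1⟩ := hH
  set m : ℝ := min ((1/2 : ℝ) ^ (2*(H - 1/2))) 1 with hm
  have hmpos : 0 < m := lt_min (Real.rpow_pos_of_pos (by norm_num) _) one_pos
  have hlb : ∀ u ∈ Set.Ioc (0:ℝ) (1/2), m ≤ mvnKernel H 1 u ^ 2 := by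
    intro u hu
    obtain ⟨hu0, hu2⟩ := hu
    have h1u : (0:ℝ) < 1 - u := by linarith
    have e : mvnKernel H 1 u ^ 2 = (1 - u) ^ (2*(H - 1/2)) := by
      unfold mvnKernel pospow
      rw [if_pos h1u, if_neg (by simp; linarith : ¬ (0:ℝ) < -u), sub_zero,
        sq, ← Real.rpow_add h1u]
      congr 1
      ring
    rw [e]
    rcases le_or_gt 0 (2*(H - 1/2)) with hcase | hcase
    · refine le_trans (min_le_left _ _) ?_
      exact Real.rpow_le_rpow (by norm_num) (by linarith) hcase
    · refine le_trans (min_le_right _ _) ?_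
      have := Real.rpow_le_rpow_of_nonpos h1u (by linarith : 1 - u ≤ 1) hcase.le
      rwa [Real.one_rpow] at this
  have hint := intSq_one ⟨h0, h1⟩
  have hs : MeasurableSet (Set.Ioc (0:ℝ) (1/2)) := measurableSet_Ioc
  have hμs : volume (Set.Ioc (0:ℝ) (1/2)) ≠ ⊤ := by
    rw [Real.volume_Ioc]; exact ENNReal.ofReal_ne_top
  have hge := setIntegral_ge_of_const_le_real hs hμs hlb hint.integrableOn
  have hμval : (volume (Set.Ioc (0:ℝ) (1/2))).toReal = 1/2 := by
    rw [Real.volume_Ioc]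
    norm_num
  rw [measureReal_def, hμval] at hge
  have hle : (∫ u in Set.Ioc (0:ℝ) (1/2), mvnKernel H 1 u ^ 2) ≤ ∫ u, mvnKernel H 1 u ^ 2 :=
    setIntegral_le_integral hint (Filter.Eventually.of_forall fun u => sq_nonneg _)
  nlinarith


theorem statement_18 (H : ℝ) (hH : H ∈ Set.Ioo (0:ℝ) 1) :
    (∀ t : ℝ, MemLp (mvnKernel H t) 2 (volume : Measure ℝ)) ∧
    ∃ κ : ℝ, 0 < κ ∧ ∀ s t : ℝ,
      (∫ u : ℝ, mvnKernel H t u * mvnKernel H s u)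
        = κ * (|t| ^ (2*H) + |s| ^ (2*H) - |t - s| ^ (2*H)) := by
  constructor
  · intro t
    exact (memLp_two_iff_integrable_sq (measurable_mvn H t).aestronglyMeasurable).2
      (intSq_all hH t)
  · refine ⟨(∫ u, mvnKernel H 1 u ^ 2) / 2, by linarith [N_one_pos hH], fun s t => ?_⟩
    have hts : Integrable (fun u => (fun v => mvnKernel H (t-s) v ^ 2) (u - s))
        (volume : Measure ℝ) := (intSq_all hH (t-s)).comp_sub_right s
    have e : (fun u => mvnKernel H t u * mvnKernel H s u)
        = fun u => ((1/2 : ℝ) * (mvnKernel H t u ^ 2) + (1/2 : ℝ) * (mvnKernel H s u ^ 2))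
            - (1/2 : ℝ) * ((fun v => mvnKernel H (t-s) v ^ 2) (u - s)) := by
      funext u
      simp only
      rw [← mvn_translate H t s u]
      ring
    have hadd : Integrable (fun u => (1/2 : ℝ) * mvnKernel H t u ^ 2
        + (1/2 : ℝ) * mvnKernel H s u ^ 2) (volume : Measure ℝ) :=
      ((intSq_all hH t).const_mul _).add ((intSq_all hH s).const_mul _)
    rw [e, integral_sub hadd (hts.const_mul _), integral_add ((intSq_all hH t).const_mul _)
      ((intSq_all hH s).const_mul _), integral_const_mul, integral_const_mul, integral_const_mul,
      integral_sub_right_eq_self (fun v => mvnKernel H (t-s) v ^ 2) s,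
      N_abs hH t, N_abs hH s, N_abs hH (t - s)]
    ring
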